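/- Let x_1 = a_1·p^{b_1·p^{k_1}} and x_2 = a_2·p^{b_2·p^{k_2}} be in standard form with D_p(x_1) = D_p(x_2) > 0. Then k_1 < k_2 if and only if x_1 < x_2, and also if and only if a_1 < a_2. -/

import Mathlib

def Dp (p : ℕ) (x : ℤ) : ℤ := (x / p) * padicValInt p x

/-! Writing `x = a p^m` with `m = b p^k`, one has `D_p(x) · p = x · m = a b · p^(m + k)`, and `a b`
is prime to `p`. Hence `D_p(x₁) = D_p(x₂)` forces `a₁ b₁ = a₂ b₂`, `m₁ + k₁ = m₂ + k₂` and
`x₁ m₁ = x₂ m₂`, while `D_p > 0` makes everything positive. So each of `k₁ < k₂`, `x₁ < x₂`,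
`a₁ < a₂` is equivalent to `m₂ < m₁`, equivalently to `b₂ < b₁`. -/

theorem lt_iff_lt_of_mul_eq_mul {R : Type*} [CommRing R] [LinearOrder R] [IsStrictOrderedRing R]
    {x₁ x₂ m₁ m₂ : R} (hm₁ : 0 < m₁) (hx₂ : 0 < x₂) (h : x₁ * m₁ = x₂ * m₂) :
    x₁ < x₂ ↔ m₂ < m₁ := by
  rw [← mul_lt_mul_iff_of_pos_right hm₁, h, mul_lt_mul_iff_of_pos_left hx₂]

theorem Nat.lt_iff_lt_of_mul_pow_add_eq {p b₁ b₂ k₁ k₂ : ℕ} (hp : 0 < p)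
    (h : b₁ * p ^ k₁ + k₁ = b₂ * p ^ k₂ + k₂) : k₁ < k₂ ↔ b₂ < b₁ := by
  constructor
  · intro hk
    have : b₂ * p ^ k₁ < b₁ * p ^ k₁ :=
      calc b₂ * p ^ k₁ ≤ b₂ * p ^ k₂ := Nat.mul_le_mul_left _ (Nat.pow_le_pow_right hp hk.le)
        _ < b₁ * p ^ k₁ := by omega
    exact Nat.lt_of_mul_lt_mul_right this
  · intro hb
    by_contra! hk
    have : b₁ * p ^ k₂ ≤ b₂ * p ^ k₂ :=
      calc b₁ * p ^ k₂ ≤ b₁ * p ^ k₁ := Nat.mul_le_mul_left _ (Nat.pow_le_pow_right hp hk)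
        _ ≤ b₂ * p ^ k₂ := by omega
    exact hb.not_ge (Nat.le_of_mul_le_mul_right this (Nat.pow_pos hp))

section padicValInt

variable {p : ℕ} [Fact p.Prime]

theorem padicValInt_mul_pow_of_not_dvd {a : ℤ} (ha : ¬ (p : ℤ) ∣ a) (m : ℕ) :
    padicValInt p (a * (p : ℤ) ^ m) = m := by
  have ha0 : a ≠ 0 := by rintro rfl; exact ha (dvd_zero _)
  rw [padicValInt.mul ha0 (pow_ne_zero _ (by exact_mod_cast (Fact.out : p.Prime).ne_zero)),
    padicValInt.eq_zero_of_not_dvd ha, ← Nat.cast_pow, padicValInt.of_nat,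
    padicValNat.prime_pow, zero_add]

theorem eq_and_eq_of_mul_pow_eq_mul_pow {u v : ℤ} {m n : ℕ} (hu : ¬ (p : ℤ) ∣ u)
    (hv : ¬ (p : ℤ) ∣ v) (h : u * (p : ℤ) ^ m = v * (p : ℤ) ^ n) : u = v ∧ m = n := by
  have hmn : m = n := by
    simpa only [padicValInt_mul_pow_of_not_dvd hu, padicValInt_mul_pow_of_not_dvd hv]
      using congrArg (padicValInt p) h
  subst hmn
  exact ⟨mul_right_cancel₀ (pow_ne_zero _ (by exact_mod_cast (Fact.out : p.Prime).ne_zero)) h, rfl⟩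

theorem Dp_mul_pow_mul_self {a : ℤ} (ha : ¬ (p : ℤ) ∣ a) (m : ℕ) :
    Dp p (a * (p : ℤ) ^ m) * p = a * (p : ℤ) ^ m * m := by
  rw [Dp, padicValInt_mul_pow_of_not_dvd ha]
  rcases m with _ | m
  · simp
  · rw [pow_succ, ← mul_assoc,
      Int.mul_ediv_cancel _ (by exact_mod_cast (Fact.out : p.Prime).ne_zero)]
    ring

end padicValInt

theorem mul_pow_mul_exponent_eq (a : ℤ) (p b k : ℕ) :
    a * (p : ℤ) ^ (b * p ^ k) * ((b * p ^ k : ℕ) : ℤ) = a * b * (p : ℤ) ^ (b * p ^ k + k) := by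
  push_cast
  ring

theorem tfae_k_x_a_general (p : ℕ) (hp : p.Prime)
    (a₁ a₂ : ℤ) (b₁ b₂ k₁ k₂ : ℕ)
    (ha₁ : ¬ (p : ℤ) ∣ a₁) (hb₁p : ¬ p ∣ b₁)
    (ha₂ : ¬ (p : ℤ) ∣ a₂) (hb₂p : ¬ p ∣ b₂)
    (hD : Dp p (a₁ * (p : ℤ) ^ (b₁ * p ^ k₁)) = Dp p (a₂ * (p : ℤ) ^ (b₂ * p ^ k₂)))
    (hpos : 0 < Dp p (a₁ * (p : ℤ) ^ (b₁ * p ^ k₁))) :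
    (k₁ < k₂ ↔ a₁ * (p : ℤ) ^ (b₁ * p ^ k₁) < a₂ * (p : ℤ) ^ (b₂ * p ^ k₂)) ∧
    (k₁ < k₂ ↔ a₁ < a₂) := by
  have := Fact.mk hp
  have hp₀ : (0 : ℤ) < p := by exact_mod_cast hp.pos
  have hb₁ : 0 < b₁ := Nat.pos_of_ne_zero fun h => hb₁p (h ▸ dvd_zero p)
  have hxm : a₁ * (p : ℤ) ^ (b₁ * p ^ k₁) * ((b₁ * p ^ k₁ : ℕ) : ℤ) =
      a₂ * (p : ℤ) ^ (b₂ * p ^ k₂) * ((b₂ * p ^ k₂ : ℕ) : ℤ) := by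
    rw [← Dp_mul_pow_mul_self ha₁, ← Dp_mul_pow_mul_self ha₂, hD]
  obtain ⟨hab, hmk⟩ := eq_and_eq_of_mul_pow_eq_mul_pow
    ((Nat.prime_iff_prime_int.mp hp).not_dvd_mul ha₁ (Int.natCast_dvd_natCast.not.mpr hb₁p))
    ((Nat.prime_iff_prime_int.mp hp).not_dvd_mul ha₂ (Int.natCast_dvd_natCast.not.mpr hb₂p))
    (by rw [← mul_pow_mul_exponent_eq, ← mul_pow_mul_exponent_eq, hxm])
  have hx₂ : 0 < a₂ * (p : ℤ) ^ (b₂ * p ^ k₂) := by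
    refine pos_of_mul_pos_left ?_ (Nat.cast_nonneg (b₂ * p ^ k₂))
    rw [← hxm, ← Dp_mul_pow_mul_self ha₁]
    exact mul_pos hpos hp₀
  have ha₂pos : 0 < a₂ := pos_of_mul_pos_left hx₂ (pow_nonneg hp₀.le _)
  have hm₁ : (0 : ℤ) < ((b₁ * p ^ k₁ : ℕ) : ℤ) := mod_cast Nat.mul_pos hb₁ (Nat.pow_pos hp.pos)
  have hk : k₁ < k₂ ↔ b₂ < b₁ := Nat.lt_iff_lt_of_mul_pow_add_eq hp.pos hmk
  constructor
  · rw [lt_iff_lt_of_mul_eq_mul hm₁ hx₂ hxm, Nat.cast_lt]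
    omega
  · rw [hk, lt_iff_lt_of_mul_eq_mul (by exact_mod_cast hb₁) ha₂pos hab]
    exact_mod_cast Iff.rfl

theorem tfae_k_x_a (p : ℕ) (hp : p.Prime)
    (a₁ a₂ : ℤ) (b₁ b₂ k₁ k₂ : ℕ)
    (ha₁0 : a₁ ≠ 0) (ha₁ : ¬ (p : ℤ) ∣ a₁) (hb₁ : 0 < b₁) (hb₁p : ¬ p ∣ b₁)
    (ha₂0 : a₂ ≠ 0) (ha₂ : ¬ (p : ℤ) ∣ a₂) (hb₂ : 0 < b₂) (hb₂p : ¬ p ∣ b₂)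
    (hD : Dp p (a₁ * (p : ℤ) ^ (b₁ * p ^ k₁)) = Dp p (a₂ * (p : ℤ) ^ (b₂ * p ^ k₂)))
    (hpos : 0 < Dp p (a₁ * (p : ℤ) ^ (b₁ * p ^ k₁))) :
    (k₁ < k₂ ↔ a₁ * (p : ℤ) ^ (b₁ * p ^ k₁) < a₂ * (p : ℤ) ^ (b₂ * p ^ k₂)) ∧
    (k₁ < k₂ ↔ a₁ < a₂) :=
  tfae_k_x_a_general p hp a₁ a₂ b₁ b₂ k₁ k₂ ha₁ hb₁p ha₂ hb₂p hD hpos
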